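/- Let ψ(t) = (1/2)(1−√t)² log((1−√t)²) + (1/2)(1+√t)² log((1+√t)²) − (1+t) log(1+t). Then for every t ∈ (0,1), −2·ψ''(t) ≥ ψ'(t), where ψ' and ψ'' denote the first and second derivatives of ψ. -/

import Mathlib

/-!
With `s = √t`, the explicit derivatives of `ψ` satisfy
`t s (1 + t) (-2ψ''(t) - ψ'(t)) = (1 - t²) A(s) + t s (1 + t) A(t) - 2s`,
where `A(x) = log (1 + x) - log (1 - x) = 2 artanh x`. The Taylor series of `artanh` has
nonnegative terms on `[0, 1)`, so `A(x) ≥ 2x` there, and the right-hand side is at least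
`2 s t³ > 0`.
-/

/-- `ψ(t) = (1/2)(1−√t)² log((1−√t)²) + (1/2)(1+√t)² log((1+√t)²) − (1+t) log(1+t)`
(note `Real.log 0 = 0`). -/
noncomputable def psi (t : ℝ) : ℝ :=
  (1 / 2) * (1 - Real.sqrt t) ^ 2 * Real.log ((1 - Real.sqrt t) ^ 2) +
    (1 / 2) * (1 + Real.sqrt t) ^ 2 * Real.log ((1 + Real.sqrt t) ^ 2) -
    (1 + t) * Real.log (1 + t)

open Real Set

theorem two_mul_le_log_one_add_sub_log_one_sub {x : ℝ} (hx₀ : 0 ≤ x) (hx₁ : x < 1) :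
    2 * x ≤ log (1 + x) - log (1 - x) := by
  have hsum := hasSum_log_sub_log_of_abs_lt_one (abs_lt.mpr ⟨by linarith, hx₁⟩)
  simpa using le_hasSum hsum 0 fun k _ ↦ by positivity

theorem sqrt_mem_Ioo_zero_one {t : ℝ} (ht : t ∈ Ioo (0 : ℝ) 1) : √t ∈ Ioo (0 : ℝ) 1 :=
  ⟨sqrt_pos.mpr ht.1, (sqrt_lt' one_pos).mpr (by rw [one_pow]; exact ht.2)⟩

theorem hasDerivAt_sq_mul_log {u : ℝ} (hu : u ≠ 0) :
    HasDerivAt (fun u ↦ u ^ 2 * log u) (u * (2 * log u + 1)) u := by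
  refine ((hasDerivAt_pow 2 u).mul (hasDerivAt_log hu)).congr_deriv ?_
  field_simp
  ring

theorem hasDerivAt_one_add_mul_log_sub_one_sub_mul_log {s : ℝ} (hadd : 1 + s ≠ 0)
    (hsub : 1 - s ≠ 0) :
    HasDerivAt (fun s ↦ (1 + s) * log (1 + s) - (1 - s) * log (1 - s))
      (log (1 + s) + log (1 - s) + 2) s := by
  have hplus := (hasDerivAt_mul_log hadd).comp_const_add 1 s
  have hminus := (hasDerivAt_mul_log hsub).comp_const_sub 1 s
  exact (hplus.sub hminus).congr_deriv (by ring)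

theorem psi_eq (t : ℝ) :
    psi t = (1 - √t) ^ 2 * log (1 - √t) + (1 + √t) ^ 2 * log (1 + √t)
      - (1 + t) * log (1 + t) := by
  simp only [psi, log_pow]
  push_cast
  ring

noncomputable def psiDeriv (t : ℝ) : ℝ :=
  ((1 + √t) * log (1 + √t) - (1 - √t) * log (1 - √t)) / √t - log (1 + t)

noncomputable def psiDeriv2 (t : ℝ) : ℝ :=
  (log (1 - √t) + log (1 + √t) + 2) / (2 * t)
    - ((1 + √t) * log (1 + √t) - (1 - √t) * log (1 - √t)) / (2 * t * √t)
    - 1 / (1 + t)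

theorem hasDerivAt_psi {t : ℝ} (ht : t ∈ Ioo (0 : ℝ) 1) : HasDerivAt psi (psiDeriv t) t := by
  obtain ⟨hs₀, hs₁⟩ := sqrt_mem_Ioo_zero_one ht
  have hsqrt := hasDerivAt_sqrt ht.1.ne'
  have h1t : 1 + t ≠ 0 := by linarith [ht.1]
  have hminus := (hasDerivAt_sq_mul_log (u := 1 - √t) (by linarith)).comp t
    ((hasDerivAt_const t 1).sub hsqrt)
  have hplus := (hasDerivAt_sq_mul_log (u := 1 + √t) (by linarith)).comp t
    ((hasDerivAt_const t 1).add hsqrt)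
  have hlog := ((hasDerivAt_id t).const_add 1).mul
    (((hasDerivAt_id t).const_add 1).log h1t)
  rw [show psi = _ from funext psi_eq]
  refine ((hminus.add hplus).sub hlog).congr_deriv ?_
  simp only [psiDeriv, id]
  field_simp
  ring

theorem hasDerivAt_psiDeriv {t : ℝ} (ht : t ∈ Ioo (0 : ℝ) 1) :
    HasDerivAt psiDeriv (psiDeriv2 t) t := by
  obtain ⟨hs₀, hs₁⟩ := sqrt_mem_Ioo_zero_one ht
  have hquot := ((hasDerivAt_one_add_mul_log_sub_one_sub_mul_log (s := √t) (by linarith)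
    (by linarith)).div (hasDerivAt_id _) hs₀.ne').comp t (hasDerivAt_sqrt ht.1.ne')
  have hlog := ((hasDerivAt_id t).const_add 1).log (by simp only [id]; linarith [ht.1])
  refine (hquot.sub hlog).congr_deriv ?_
  simp only [psiDeriv2, id]
  set s := √t
  rw [show t = s ^ 2 from (sq_sqrt ht.1.le).symm]
  field_simp
  ring

theorem neg_two_mul_psiDeriv2_sub_psiDeriv_mul {t : ℝ} (ht : t ∈ Ioo (0 : ℝ) 1) :
    (-2 * psiDeriv2 t - psiDeriv t) * (t * √t * (1 + t)) =
      (1 - t ^ 2) * (log (1 + √t) - log (1 - √t))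
        + t * √t * (1 + t) * (log (1 + t) - log (1 - t)) - 2 * √t := by
  obtain ⟨hs₀, hs₁⟩ := sqrt_mem_Ioo_zero_one ht
  have hlog : log (1 - t) = log (1 - √t) + log (1 + √t) := by
    rw [← log_mul (by linarith) (by linarith)]
    congr 1
    linear_combination sq_sqrt ht.1.le
  rw [hlog]
  simp only [psiDeriv, psiDeriv2]
  set s := √t
  rw [show t = s ^ 2 from (sq_sqrt ht.1.le).symm]
  field_simp
  ring

theorem psiDeriv_le_neg_two_mul_psiDeriv2 {t : ℝ} (ht : t ∈ Ioo (0 : ℝ) 1) :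
    psiDeriv t ≤ -2 * psiDeriv2 t := by
  obtain ⟨hs₀, hs₁⟩ := sqrt_mem_Ioo_zero_one ht
  obtain ⟨ht₀, ht₁⟩ := ht
  have hAs := two_mul_le_log_one_add_sub_log_one_sub hs₀.le hs₁
  have hAt := two_mul_le_log_one_add_sub_log_one_sub ht₀.le ht₁
  have hsq : 0 ≤ 1 - t ^ 2 := by nlinarith
  have hprod : 0 ≤ (-2 * psiDeriv2 t - psiDeriv t) * (t * √t * (1 + t)) := by
    rw [neg_two_mul_psiDeriv2_sub_psiDeriv_mul ⟨ht₀, ht₁⟩]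
    calc (0 : ℝ) ≤ 2 * √t * t ^ 3 := by positivity
      _ = (1 - t ^ 2) * (2 * √t) + t * √t * (1 + t) * (2 * t) - 2 * √t := by ring
      _ ≤ _ := by gcongr
  linarith [nonneg_of_mul_nonneg_left hprod (by positivity)]

/-- For every `t ∈ (0,1)`, `−2·ψ''(t) ≥ ψ'(t)`. -/
theorem neg_two_psi_second_deriv_ge :
    ∀ t ∈ Set.Ioo (0 : ℝ) 1, -2 * deriv (deriv psi) t ≥ deriv psi t := by
  intro t ht
  have hderiv : EqOn (deriv psi) psiDeriv (Ioo 0 1) := fun x hx ↦ (hasDerivAt_psi hx).deriv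
  have hderiv2 : deriv (deriv psi) t = psiDeriv2 t := by
    rw [(hderiv.eventuallyEq_of_mem (isOpen_Ioo.mem_nhds ht)).deriv_eq]
    exact (hasDerivAt_psiDeriv ht).deriv
  rw [hderiv2, hderiv ht]
  exact psiDeriv_le_neg_two_mul_psiDeriv2 ht
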